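/- arXiv:2605.14173 — 4 statements merged into one kernel-verified Lean document; each statement's English description precedes it below -/
import Mathlib

section
/- Assume the UB setup. Then ker(H_Z) = {(p, (a*)^{t−1}·p + h*·q) : p, q ∈ R_n}, where products and powers are taken in R_n. -/
open Polynomial

noncomputable section

/-- `R_n = F_2[x]/(x^n - 1)`. -/
abbrev Rq (n : ℕ) : Type :=
  Polynomial (ZMod 2) ⧸ Ideal.span ({X ^ n - 1} : Set (Polynomial (ZMod 2)))

/-- The canonical projection `F_2[x] → R_n`. -/
abbrev mkq (n : ℕ) : Polynomial (ZMod 2) →+* Rq n :=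
  Ideal.Quotient.mk (Ideal.span ({X ^ n - 1} : Set (Polynomial (ZMod 2))))

/-- The unique polynomial representative of degree `< n` of an element of `R_n`
(obtained by reducing any lift modulo the monic polynomial `x^n - 1`). -/
def rep (n : ℕ) (z : Rq n) : Polynomial (ZMod 2) :=
  Function.surjInv Ideal.Quotient.mk_surjective z %ₘ (X ^ n - 1)

/-- Hamming weight of an element of `R_n`: the number of nonzero coefficients of its
unique representative of degree `< n`. -/
def wtq (n : ℕ) (z : Rq n) : ℕ := (rep n z).support.card

lemma reverse_pow' (a : Polynomial (ZMod 2)) (k : ℕ) :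
    (a ^ k).reverse = a.reverse ^ k := by
  induction k with
  | zero => simp [Polynomial.reverse]
  | succ k ih => rw [pow_succ, reverse_mul_of_domain, ih, pow_succ]

lemma two_eq_zero_Rq (n : ℕ) : (1 + 1 : Rq n) = 0 := by
  have h2 : ((1 + 1 : Polynomial (ZMod 2))) = 0 := by
    rw [← Polynomial.C_1, ← Polynomial.C_add]
    norm_num
    decide
  calc (1 + 1 : Rq n) = mkq n (1 + 1) := by rw [map_add, map_one]
    _ = 0 := by rw [h2, map_zero]

lemma add_self_Rq (n : ℕ) (z : Rq n) : z + z = 0 := by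
  have := two_eq_zero_Rq n
  calc z + z = (1 + 1) * z := by ring
    _ = 0 := by rw [this, zero_mul]

/-- in the UB setup (`a ∣ x^n - 1`, `h = (x^n-1)/a`, `t = 2^ℓ`, `b = a^t`),
`ker(H_Z) = {(p, (a*)^{t-1}·p + h*·q) : p, q ∈ R_n}`. -/
theorem stmt5 (n : ℕ) (hn : 1 ≤ n) (a h : Polynomial (ZMod 2))
    (hah : a * h = X ^ n - 1) (hr : 0 < a.natDegree) (ℓ t : ℕ) (hℓ : 1 ≤ ℓ)
    (ht : t = 2 ^ ℓ) :
    {w : Rq n × Rq n | mkq n ((a ^ t).reverse) * w.1 + mkq n a.reverse * w.2 = 0} =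
    {w : Rq n × Rq n | ∃ p q : Rq n,
      w = (p, (mkq n a.reverse) ^ (t - 1) * p + mkq n h.reverse * q)} := by
  have ha0 : a ≠ 0 := by
    intro h0
    rw [h0] at hr
    simp at hr
  have harev : a.reverse ≠ 0 := fun hh => ha0 (reverse_eq_zero.mp hh)
  have ht1 : 1 ≤ t := by
    rw [ht]; exact Nat.one_le_two_pow
  have htt : t = (t - 1) + 1 := (Nat.succ_pred_eq_of_pos ht1).symm
  -- reverse of X^n - 1 is (up to sign) X^n - 1
  have hXn : (X ^ n - 1 : Polynomial (ZMod 2)).reverse = 1 - X ^ n := by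
    have hdeg : (X ^ n - 1 : Polynomial (ZMod 2)).natDegree = n := by
      have : (X ^ n - 1 : Polynomial (ZMod 2)) = X ^ n - C 1 := by simp
      rw [this, natDegree_X_pow_sub_C]
    rw [Polynomial.reverse, hdeg, reflect_sub, reflect_monomial, reflect_one]
    simp [revAt_le (le_refl n)]
  have hrev : a.reverse * h.reverse = 1 - X ^ n := by
    rw [← reverse_mul_of_domain, hah, hXn]
  have hdvd : (X ^ n - 1 : Polynomial (ZMod 2)) ∣ a.reverse * h.reverse := by
    rw [hrev]; exact ⟨-1, by ring⟩
  have hmk0 : mkq n a.reverse * mkq n h.reverse = 0 := by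
    rw [← map_mul, Ideal.Quotient.eq_zero_iff_mem, Ideal.mem_span_singleton]
    exact hdvd
  have hpow : mkq n ((a ^ t).reverse) = (mkq n a.reverse) ^ t := by
    rw [reverse_pow', map_pow]
  ext w
  simp only [Set.mem_setOf_eq]
  constructor
  · intro hw
    obtain ⟨U, hU⟩ := Ideal.Quotient.mk_surjective w.1
    obtain ⟨V, hV⟩ := Ideal.Quotient.mk_surjective w.2
    -- (X^n - 1) divides a.reverse^t * U + a.reverse * V
    have hker : mkq n (a.reverse ^ t * U + a.reverse * V) = 0 := by
      rw [map_add, map_mul, map_mul, hU, hV, ← reverse_pow']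
      exact hw
    rw [Ideal.Quotient.eq_zero_iff_mem, Ideal.mem_span_singleton] at hker
    have hfact : a.reverse ^ t * U + a.reverse * V
        = a.reverse * (a.reverse ^ (t - 1) * U + V) := by
      conv_lhs => rw [htt]
      rw [pow_succ]; ring
    have hdvd2 : a.reverse * h.reverse ∣ a.reverse * (a.reverse ^ (t - 1) * U + V) := by
      rw [← hfact]
      exact dvd_trans (Dvd.intro (-1) (by rw [hrev]; ring)) hker
    have hdvd3 : h.reverse ∣ a.reverse ^ (t - 1) * U + V :=
      (mul_dvd_mul_iff_left harev).mp hdvd2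
    obtain ⟨Q, hQ⟩ := hdvd3
    refine ⟨w.1, mkq n Q, ?_⟩
    have hv2 : w.2 = (mkq n a.reverse) ^ (t - 1) * w.1 + mkq n h.reverse * mkq n Q := by
      have := congrArg (mkq n) hQ
      rw [map_add, map_mul, map_mul, map_pow, hU, hV] at this
      linear_combination this - add_self_Rq n ((mkq n a.reverse) ^ (t - 1) * w.1)
    exact Prod.ext rfl hv2
  · rintro ⟨p, q, rfl⟩
    simp only
    have hps : (mkq n a.reverse) ^ t = (mkq n a.reverse) ^ (t - 1) * mkq n a.reverse := by
      conv_lhs => rw [htt, pow_succ]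
    rw [hpow, hps]
    linear_combination add_self_Rq n ((mkq n a.reverse) ^ (t - 1) * mkq n a.reverse * p) + q * hmk0

end
end

section
/- Assume the UB setup. Let α, β ∈ F_2[x] be polynomials of degree < r, not both zero. Then the pair (α·f + β·h, α) ∈ R_n² lies in ker(H_X) but not in rs(H_Z); consequently d_X ≤ wt(α·f + β·h) + wt(α). -/
open Polynomial

noncomputable section

/-- The `Z`-distance of `UB(a, ℓ)` (with `t = 2^ℓ`):
`d_Z = min { wt(u) + wt(v) : (u,v) ∈ ker H_Z \ rs H_X }`, where
`ker H_Z = {(u,v) : b*·u + a*·v = 0}` and `rs H_X = {(a·s, b·s)}`, `b = a^t`. -/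
def dZv (n : ℕ) (a : Polynomial (ZMod 2)) (t : ℕ) : ℕ :=
  sInf {m : ℕ | ∃ w : Rq n × Rq n,
    (mkq n ((a ^ t).reverse) * w.1 + mkq n a.reverse * w.2 = 0) ∧
    (¬ ∃ s : Rq n, w = (mkq n a * s, (mkq n a) ^ t * s)) ∧
    m = wtq n w.1 + wtq n w.2}

/-- The `X`-distance of `UB(a, ℓ)` (with `t = 2^ℓ`):
`d_X = min { wt(u) + wt(v) : (u,v) ∈ ker H_X \ rs H_Z }`, where
`ker H_X = {(u,v) : a·u + b·v = 0}` and `rs H_Z = {(b*·s, a*·s)}`, `b = a^t`. -/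
def dXv (n : ℕ) (a : Polynomial (ZMod 2)) (t : ℕ) : ℕ :=
  sInf {m : ℕ | ∃ w : Rq n × Rq n,
    (mkq n a * w.1 + (mkq n a) ^ t * w.2 = 0) ∧
    (¬ ∃ s : Rq n, w = (mkq n ((a ^ t).reverse) * s, mkq n a.reverse * s)) ∧
    m = wtq n w.1 + wtq n w.2}

/-- for polynomials `α, β` of degree `< r`, not both zero,
`(α f + β h, α) ∈ ker(H_X) \ rs(H_Z)` (with `f = a^{t-1}` in `R_n`), hence
`d_X ≤ wt(α f + β h) + wt(α)`. -/
theorem stmt11 (n : ℕ) (hn : 1 ≤ n) (a h : Polynomial (ZMod 2))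
    (hah : a * h = X ^ n - 1) (hr : 0 < a.natDegree) (ℓ t : ℕ) (hℓ : 1 ≤ ℓ)
    (ht : t = 2 ^ ℓ)
    (α β : Polynomial (ZMod 2))
    (hα : α.degree < (a.natDegree : WithBot ℕ))
    (hβ : β.degree < (a.natDegree : WithBot ℕ))
    (hne : ¬(α = 0 ∧ β = 0)) :
    (mkq n a * (mkq n α * (mkq n a) ^ (t - 1) + mkq n β * mkq n h) +
        (mkq n a) ^ t * mkq n α = 0) ∧
    (¬ ∃ s : Rq n,
      (mkq n α * (mkq n a) ^ (t - 1) + mkq n β * mkq n h, mkq n α) =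
        (mkq n ((a ^ t).reverse) * s, mkq n a.reverse * s)) ∧
    dXv n a t ≤
      wtq n (mkq n α * (mkq n a) ^ (t - 1) + mkq n β * mkq n h) + wtq n (mkq n α) := by
  have ht1 : 1 ≤ t := by subst ht; exact Nat.one_le_two_pow
  obtain ⟨k, hk⟩ : ∃ k, t = k + 1 := ⟨t - 1, by omega⟩
  subst hk
  simp only [Nat.add_sub_cancel]
  have hXn : (X ^ n - 1 : Polynomial (ZMod 2)) ≠ 0 := by
    have := Polynomial.X_pow_sub_C_ne_zero (R := ZMod 2) (Nat.lt_of_lt_of_le zero_lt_one hn) 1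
    simpa using this
  have hah0 : a * h ≠ 0 := hah ▸ hXn
  have ha0 : a ≠ 0 := fun h0 => hah0 (by rw [h0, zero_mul])
  have hh0 : h ≠ 0 := fun h0 => hah0 (by rw [h0, mul_zero])
  have h2 : (2 : Polynomial (ZMod 2)) = 0 := CharTwo.two_eq_zero
  -- mkq kills multiples of X^n - 1
  have hmk0 : ∀ z : Polynomial (ZMod 2), (X ^ n - 1) ∣ z → mkq n z = 0 := by
    intro z hz
    exact Ideal.Quotient.eq_zero_iff_mem.mpr (Ideal.mem_span_singleton.mpr hz)
  have hmk0' : ∀ z : Polynomial (ZMod 2), mkq n z = 0 → (X ^ n - 1) ∣ z := by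
    intro z hz
    exact Ideal.mem_span_singleton.mp (Ideal.Quotient.eq_zero_iff_mem.mp hz)
  -- reverse of X^n - 1
  have hrev : (X ^ n - 1 : Polynomial (ZMod 2)).reverse = X ^ n - 1 := by
    have hsub : (X ^ n - 1 : Polynomial (ZMod 2)) = X ^ n + C 1 := by
      rw [C_1, sub_eq_add_neg, CharTwo.neg_eq]
    rw [hsub, reverse, natDegree_X_pow_add_C, reflect_add, reflect_monomial,
      revAt_le (le_refl n), Nat.sub_self, reflect_C, pow_zero]
    simp [add_comm]
  -- Part 1
  have part1 : mkq n a * (mkq n α * (mkq n a) ^ k + mkq n β * mkq n h) +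
      (mkq n a) ^ (k + 1) * mkq n α = 0 := by
    have e1 : mkq n a * (mkq n α * (mkq n a) ^ k + mkq n β * mkq n h) +
        (mkq n a) ^ (k + 1) * mkq n α
        = mkq n (a * (α * a ^ k + β * h) + a ^ (k + 1) * α) := by
      simp [map_add, map_mul, map_pow]
    rw [e1]
    apply hmk0
    exact ⟨β, by linear_combination β * hah + α * a ^ (k + 1) * h2⟩
  -- Part 2
  have part2 : ¬ ∃ s : Rq n,
      (mkq n α * (mkq n a) ^ k + mkq n β * mkq n h, mkq n α) =
        (mkq n ((a ^ (k + 1)).reverse) * s, mkq n a.reverse * s) := by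
    rintro ⟨s, hs⟩
    rw [Prod.mk.injEq] at hs
    obtain ⟨hs1, hs2⟩ := hs
    obtain ⟨σ, hσ⟩ := Ideal.Quotient.mk_surjective s
    subst hσ
    have hfact : (X ^ n - 1 : Polynomial (ZMod 2)) = a.reverse * h.reverse := by
      rw [← hrev, ← hah, reverse_mul_of_domain]
    -- X^n - 1 divides α - a.reverse * σ
    obtain ⟨kp, hkp⟩ : (X ^ n - 1 : Polynomial (ZMod 2)) ∣ α - a.reverse * σ := by
      apply hmk0'
      rw [map_sub, map_mul, hs2, sub_self]
    have hαdvd : a.reverse ∣ α := ⟨σ + h.reverse * kp, by linear_combination hkp + kp * hfact⟩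
    -- degrees
    have hcoeff : a.coeff 0 ≠ 0 := by
      intro h0
      have : (a * h).coeff 0 = (X ^ n - 1 : Polynomial (ZMod 2)).coeff 0 := by rw [hah]
      rw [mul_coeff_zero, h0, zero_mul] at this
      have h1 : (X ^ n - 1 : Polynomial (ZMod 2)).coeff 0 = -1 := by
        simp [coeff_X_pow, (show ¬ (0 = n) by omega)]
      rw [h1] at this
      exact one_ne_zero (by rwa [CharTwo.neg_eq, eq_comm] at this : (1 : ZMod 2) = 0)
    have hdeg : a.reverse.natDegree = a.natDegree := by
      rw [reverse_natDegree]
      have : a.natTrailingDegree = 0 := natTrailingDegree_eq_zero.mpr (Or.inr hcoeff)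
      omega
    have hα0 : α = 0 := by
      by_contra hα0
      have h1 : a.reverse.natDegree ≤ α.natDegree := Polynomial.natDegree_le_of_dvd hαdvd hα0
      have h2' : α.natDegree < a.natDegree := (natDegree_lt_iff_degree_lt hα0).mpr hα
      omega
    have harev0 : a.reverse ≠ 0 := fun h0 => ha0 (reverse_eq_zero.mp h0)
    rw [hα0] at hkp
    obtain ⟨m, hm⟩ : h.reverse ∣ σ := by
      refine ⟨-kp, mul_left_cancel₀ harev0 ?_⟩
      linear_combination -hkp - kp * hfact
    -- now β h ≡ 0
    have hz : mkq n ((a ^ (k + 1)).reverse * σ) = 0 := by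
      apply hmk0
      have e : (a ^ (k + 1)).reverse * h.reverse = (a ^ k).reverse * (X ^ n - 1) := by
        rw [← reverse_mul_of_domain]
        have e2 : a ^ (k + 1) * h = a ^ k * (X ^ n - 1) := by rw [← hah]; ring
        rw [e2, reverse_mul_of_domain, hrev]
      exact ⟨(a ^ k).reverse * m, by rw [hm]; linear_combination m * e⟩
    have hβh : mkq n (β * h) = 0 := by
      rw [hα0, map_zero, zero_mul, zero_add] at hs1
      rw [map_mul]
      rw [hs1, ← map_mul]
      exact hz
    have hβ0 : β = 0 := by
      have hd : a * h ∣ β * h := hah ▸ hmk0' _ hβh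
      have had : a ∣ β := (mul_dvd_mul_iff_right hh0).mp hd
      by_contra hβ0
      have h1 : a.natDegree ≤ β.natDegree := Polynomial.natDegree_le_of_dvd had hβ0
      have h2' : β.natDegree < a.natDegree := (natDegree_lt_iff_degree_lt hβ0).mpr hβ
      omega
    exact hne ⟨hα0, hβ0⟩
  refine ⟨part1, part2, ?_⟩
  apply Nat.sInf_le
  exact ⟨(mkq n α * (mkq n a) ^ k + mkq n β * mkq n h, mkq n α), part1, part2, rfl⟩

end
end

section
/- Assume the UB setup. Then d ≤ min{wt(f) + 1, wt(h)}, where the weights are computed in R_n. -/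
/-!
Both bounds already hold for `d_X`. The words `(a^{t-1}, 1)` and `(h, 0)` lie in `ker H_X`,
because `a · a^{t-1} + b · 1 = 2b = 0` and `a · h = x^n - 1`. Neither lies in
`rs H_Z`: from `h* · a* = -(x^n - 1) ≡ 0` with `h*` a nonzero polynomial of degree `< n`,
`a*` is a zero divisor of `R_n`, so `1 ∉ a* R_n`; and `a* s = 0` forces
`b* s = (a*)^{t-1} · a* s = 0`, whereas `h ≢ 0`.
-/

open Polynomial

noncomputable section

namespace Polynomial

variable {R : Type*}

theorem X_pow_sub_one_ne_zero [Ring R] [Nontrivial R] {n : ℕ} (hn : 0 < n) :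
    (X ^ n - 1 : R[X]) ≠ 0 := by
  simpa using X_pow_sub_C_ne_zero hn (1 : R)

theorem natDegree_X_pow_sub_one [Ring R] [Nontrivial R] (n : ℕ) :
    (X ^ n - 1 : R[X]).natDegree = n := by
  simpa using natDegree_X_pow_sub_C (n := n) (r := (1 : R))

theorem reverse_X_pow_sub_one [Ring R] [Nontrivial R] (n : ℕ) :
    (X ^ n - 1 : R[X]).reverse = 1 - X ^ n := by
  simp [reverse, natDegree_X_pow_sub_one, reflect_sub]

theorem reverse_pow [Semiring R] [NoZeroDivisors R] (p : R[X]) (k : ℕ) :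
    (p ^ k).reverse = p.reverse ^ k := by
  induction k with
  | zero => simp [reverse]
  | succ k ih => rw [pow_succ, reverse_mul_of_domain, ih, pow_succ]

theorem natDegree_lt_of_mul_eq [Semiring R] [NoZeroDivisors R] {a h p : R[X]}
    (hah : a * h = p) (hp : p ≠ 0) (ha : 0 < a.natDegree) : h.natDegree < p.natDegree := by
  have hh : h ≠ 0 := right_ne_zero_of_mul (hah ▸ hp)
  have ha0 : a ≠ 0 := left_ne_zero_of_mul (hah ▸ hp)
  rw [← hah, natDegree_mul ha0 hh]
  omega

end Polynomial

section CyclicRing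

variable {n : ℕ}

theorem mkq_X_pow_sub_one (n : ℕ) : mkq n (X ^ n - 1) = 0 :=
  Ideal.Quotient.eq_zero_iff_mem.mpr (Ideal.subset_span rfl)

theorem mkq_ne_zero {p : (ZMod 2)[X]} (hp : p ≠ 0) (hpn : p.natDegree < n) : mkq n p ≠ 0 := by
  rw [Ne, Ideal.Quotient.eq_zero_iff_mem, Ideal.mem_span_singleton]
  exact not_dvd_of_natDegree_lt hp (by rwa [natDegree_X_pow_sub_one])

theorem Rq.add_self_eq_zero (x : Rq n) : x + x = 0 := by
  have h2 : (2 : (ZMod 2)[X]) = 0 := CharTwo.two_eq_zero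
  rw [← two_mul, ← map_ofNat (mkq n) 2, h2, map_zero, zero_mul]

theorem rep_mkq (hn : 1 ≤ n) {p : (ZMod 2)[X]} (hp : p.degree < n) : rep n (mkq n p) = p := by
  have hmonic : (X ^ n - 1 : (ZMod 2)[X]).Monic := by
    simpa using monic_X_pow_sub_C (1 : ZMod 2) (by omega : n ≠ 0)
  have hdeg : (X ^ n - 1 : (ZMod 2)[X]).degree = n := by
    rw [degree_eq_natDegree hmonic.ne_zero, natDegree_X_pow_sub_one]
  set q := Function.surjInv Ideal.Quotient.mk_surjective (mkq n p)
  have hq : mkq n q = mkq n p := Function.surjInv_eq _ _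
  have hdvd : (X ^ n - 1 : (ZMod 2)[X]) ∣ q %ₘ (X ^ n - 1) - p := by
    rw [← Ideal.mem_span_singleton, ← Ideal.Quotient.eq, modByMonic_eq_sub_mul_div q (X ^ n - 1),
      map_sub, map_mul, mkq_X_pow_sub_one, zero_mul, sub_zero, hq]
  refine sub_eq_zero.mp (eq_zero_of_dvd_of_degree_lt hdvd ?_)
  rw [hdeg]
  exact (degree_sub_le _ _).trans_lt (max_lt (hdeg ▸ degree_modByMonic_lt q hmonic) hp)

theorem wtq_zero (hn : 1 ≤ n) : wtq n 0 = 0 := by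
  rw [wtq, ← map_zero (mkq n), rep_mkq hn (by simp), support_zero, Finset.card_empty]

theorem wtq_one (hn : 1 ≤ n) : wtq n 1 = 1 := by
  rw [wtq, ← map_one (mkq n), rep_mkq hn (by rw [degree_one]; exact_mod_cast hn), ← C_1,
    support_C one_ne_zero, Finset.card_singleton]

end CyclicRing

section UBCode

variable {n t : ℕ} {a h : (ZMod 2)[X]}

theorem natDegree_cofactor_lt (hn : 1 ≤ n) (hah : a * h = X ^ n - 1) (ha : 0 < a.natDegree) :
    h.natDegree < n := by
  simpa [natDegree_X_pow_sub_one] using natDegree_lt_of_mul_eq hah (X_pow_sub_one_ne_zero hn) ha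

theorem cofactor_ne_zero (hn : 1 ≤ n) (hah : a * h = X ^ n - 1) : h ≠ 0 :=
  right_ne_zero_of_mul (hah ▸ X_pow_sub_one_ne_zero hn)

theorem not_isUnit_mkq_reverse (hn : 1 ≤ n) (hah : a * h = X ^ n - 1) (ha : 0 < a.natDegree) :
    ¬ IsUnit (mkq n a.reverse) := by
  intro hunit
  have hrev : h.reverse * a.reverse = -(X ^ n - 1) := by
    rw [← reverse_mul_of_domain, mul_comm, hah, reverse_X_pow_sub_one, neg_sub]
  have hzero : mkq n h.reverse * mkq n a.reverse = 0 := by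
    rw [← map_mul, hrev, map_neg, mkq_X_pow_sub_one, neg_zero]
  exact mkq_ne_zero (reverse_eq_zero.not.mpr (cofactor_ne_zero hn hah))
    ((reverse_natDegree_le h).trans_lt (natDegree_cofactor_lt hn hah ha))
    (hunit.mul_left_eq_zero.mp hzero)

theorem dXv_le (w : Rq n × Rq n) (hker : mkq n a * w.1 + mkq n a ^ t * w.2 = 0)
    (hrs : ¬ ∃ s : Rq n, w = (mkq n (a ^ t).reverse * s, mkq n a.reverse * s)) :
    dXv n a t ≤ wtq n w.1 + wtq n w.2 :=
  Nat.sInf_le ⟨w, hker, hrs, rfl⟩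

theorem dXv_le_wtq_pow_add_one (hn : 1 ≤ n) (hah : a * h = X ^ n - 1) (ha : 0 < a.natDegree)
    (ht : 1 ≤ t) : dXv n a t ≤ wtq n (mkq n a ^ (t - 1)) + 1 := by
  have hker : mkq n a * mkq n a ^ (t - 1) + mkq n a ^ t * 1 = 0 := by
    rw [mul_one, ← pow_succ', Nat.sub_add_cancel ht, Rq.add_self_eq_zero]
  have hrs : ¬ ∃ s : Rq n,
      (mkq n a ^ (t - 1), 1) = (mkq n (a ^ t).reverse * s, mkq n a.reverse * s) := by
    rintro ⟨s, hs⟩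
    exact not_isUnit_mkq_reverse hn hah ha (IsUnit.of_mul_eq_one s (congrArg Prod.snd hs).symm)
  simpa [wtq_one hn] using dXv_le _ hker hrs

theorem dXv_le_wtq_cofactor (hn : 1 ≤ n) (hah : a * h = X ^ n - 1) (ha : 0 < a.natDegree)
    (ht : 1 ≤ t) : dXv n a t ≤ wtq n (mkq n h) := by
  have hker : mkq n a * mkq n h + mkq n a ^ t * 0 = 0 := by
    rw [mul_zero, add_zero, ← map_mul, hah, mkq_X_pow_sub_one]
  have hrs : ¬ ∃ s : Rq n, (mkq n h, 0) = (mkq n (a ^ t).reverse * s, mkq n a.reverse * s) := by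
    rintro ⟨s, hs⟩
    obtain ⟨hs₁, hs₀⟩ := Prod.mk.inj hs
    apply mkq_ne_zero (cofactor_ne_zero hn hah) (natDegree_cofactor_lt hn hah ha)
    rw [hs₁, reverse_pow, map_pow, ← Nat.sub_add_cancel ht, pow_succ, mul_assoc, ← hs₀, mul_zero]
  simpa [wtq_zero hn] using dXv_le _ hker hrs

end UBCode

theorem stmt12_general (n : ℕ) (hn : 1 ≤ n) (a h : Polynomial (ZMod 2))
    (hah : a * h = X ^ n - 1) (hr : 0 < a.natDegree) (ℓ t : ℕ)
    (ht : t = 2 ^ ℓ) :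
    min (dXv n a t) (dZv n a t) ≤
      min (wtq n ((mkq n a) ^ (t - 1)) + 1) (wtq n (mkq n h)) := by
  have ht₁ : 1 ≤ t := ht ▸ Nat.one_le_two_pow
  exact (min_le_left _ _).trans
    (le_min (dXv_le_wtq_pow_add_one hn hah hr ht₁) (dXv_le_wtq_cofactor hn hah hr ht₁))

/-- in the UB setup, `d ≤ min{wt(f) + 1, wt(h)}` with `f = a^{t-1}` in `R_n`. -/
theorem stmt12 (n : ℕ) (hn : 1 ≤ n) (a h : Polynomial (ZMod 2))
    (hah : a * h = X ^ n - 1) (hr : 0 < a.natDegree) (ℓ t : ℕ) (hℓ : 1 ≤ ℓ)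
    (ht : t = 2 ^ ℓ) :
    min (dXv n a t) (dZv n a t) ≤
      min (wtq n ((mkq n a) ^ (t - 1)) + 1) (wtq n (mkq n h)) :=
  stmt12_general n hn a h hah hr ℓ t ht

end
end

section
/- Let a, b ∈ F_2[x], let A := Circ(a), B := Circ(b), and let H_X := [A B] and H_Z := [B^T A^T] be n×2n matrices over F_2. Then there exist an n×n permutation matrix P and a 2n×2n permutation matrix Q such that H_Z = P·H_X·Q and H_X = P·H_Z·Q (concretely, one can take P the index-reversal permutation P_{ij} = 1 iff i + j ≡ 0 (mod n), and Q the permutation that swaps the two length-n blocks and applies the index reversal within each block). Consequently d_X = d_Z, where d_Z := min{wt(w) : w ∈ F_2^{2n}, H_Z w = 0, w ∉ rs(H_X)} and d_X := min{wt(w) : w ∈ F_2^{2n}, H_X w = 0, w ∉ rs(H_Z)}. -/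
/-!
The `(i, j)` entry of a circulant matrix depends only on `j - i`, so reversing the indices
`i ↦ -i (mod n)` of both rows and columns transposes it. Hence reversing the rows, and reversing
the columns while swapping the two column blocks, carries `[A B]` to `[Bᵀ Aᵀ]` and back. A
permutation of the coordinates preserves Hamming weight and carries kernels and row spaces of
the permuted matrices to each other, so the two sets of logical weights, and their minima,
coincide.
-/

open Polynomial Matrix

noncomputable section

/-- The `n × n` circulant matrix of `a ∈ F_2[x]`: entry `(i,j)` is the coefficient of
`x^((j-i) mod n)` in the reduction of `a` modulo `x^n - 1`. -/
def Circ (n : ℕ) (a : Polynomial (ZMod 2)) : Matrix (Fin n) (Fin n) (ZMod 2) :=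
  Matrix.of fun i j => (a %ₘ (X ^ n - 1)).coeff ((j - i : Fin n) : ℕ)

lemma hammingNorm_comp_equiv {ι κ α : Type*} [Fintype ι] [Fintype κ] [Zero α] [DecidableEq α]
    (w : ι → α) (f : κ ≃ ι) : hammingNorm (w ∘ f) = hammingNorm w :=
  Finset.card_equiv f (by simp)

namespace Matrix

variable {R : Type*}

theorem permMatrix_mul_mul_permMatrix {m n : Type*} [Fintype m] [DecidableEq m]
    [Fintype n] [DecidableEq n] [NonAssocSemiring R]
    (M : Matrix m n R) (σ : Equiv.Perm m) (τ : Equiv.Perm n) :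
    σ.permMatrix R * M * τ.permMatrix R = M.submatrix σ τ.symm := by
  rw [PEquiv.toMatrix_toPEquiv_mul, PEquiv.mul_toMatrix_toPEquiv, submatrix_submatrix]
  rfl

theorem fromCols_submatrix_sumComm {m m' n n' : Type*} (A B : Matrix m n R) (e : m' → m)
    (f : n' ≃ n) :
    (fromCols A B).submatrix e ((Equiv.sumComm n' n').trans (Equiv.sumCongr f f)) =
      fromCols (B.submatrix e f) (A.submatrix e f) := by
  ext i (j | j) <;> rfl

theorem submatrix_mulVec_comp_eq_zero_iff {m m' ι ι' : Type*} [Fintype ι] [Fintype ι']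
    [NonUnitalNonAssocSemiring R] (H : Matrix m ι R) (e : m' ≃ m) (f : ι' ≃ ι) (w : ι → R) :
    H.submatrix e f *ᵥ (w ∘ f) = 0 ↔ H *ᵥ w = 0 := by
  rw [submatrix_mulVec_equiv, Function.comp_assoc, f.self_comp_symm, Function.comp_id]
  exact e.surjective.injective_comp_right.eq_iff' rfl

theorem comp_mem_range_vecMulLinear_submatrix_iff {k k' ι ι' : Type*} [Fintype k] [Fintype k']
    [CommSemiring R] (G : Matrix k ι R) (e : k' ≃ k) (f : ι' ≃ ι) (w : ι → R) :
    w ∘ f ∈ LinearMap.range (G.submatrix e f).vecMulLinear ↔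
      w ∈ LinearMap.range G.vecMulLinear := by
  simp only [LinearMap.mem_range, vecMulLinear_apply, submatrix_vecMul_equiv,
    f.surjective.injective_comp_right.eq_iff]
  exact (e.arrowCongr (Equiv.refl R)).exists_congr_right (q := fun u => u ᵥ* G = w)

section LogicalWeights

variable {m k ι : Type*} [Fintype k] [Fintype ι] [CommSemiring R] [DecidableEq R]

def logicalWeights (H : Matrix m ι R) (G : Matrix k ι R) : Set ℕ :=
  {d | ∃ w : ι → R, H *ᵥ w = 0 ∧ w ∉ LinearMap.range G.vecMulLinear ∧ d = hammingNorm w}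

theorem logicalWeights_submatrix {m' k' ι' : Type*} [Fintype k'] [Fintype ι']
    (H : Matrix m ι R) (G : Matrix k ι R) (e : m' ≃ m) (e' : k' ≃ k) (f : ι' ≃ ι) :
    logicalWeights (H.submatrix e f) (G.submatrix e' f) = logicalWeights H G := by
  ext d
  simp only [logicalWeights, Set.mem_ofPred_eq]
  rw [← (f.symm.arrowCongr (Equiv.refl R)).exists_congr_right]
  simp only [Equiv.arrowCongr, Equiv.coe_fn_mk, Equiv.coe_refl, Function.id_comp, Equiv.symm_symm,
    submatrix_mulVec_comp_eq_zero_iff, comp_mem_range_vecMulLinear_submatrix_iff,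
    hammingNorm_comp_equiv]

end LogicalWeights

end Matrix

theorem transpose_Circ (n : ℕ) (a : Polynomial (ZMod 2)) :
    (Circ n a)ᵀ = (Circ n a).submatrix (Equiv.neg (Fin n)) (Equiv.neg (Fin n)) := by
  ext i j
  cases n with
  | zero => exact i.elim0
  | succ n => simp [Circ, neg_add_eq_sub]

theorem Circ_eq_transpose_submatrix_neg (n : ℕ) (a : Polynomial (ZMod 2)) :
    Circ n a = (Circ n a)ᵀ.submatrix (Equiv.neg (Fin n)) (Equiv.neg (Fin n)) := by
  rw [← transpose_submatrix, ← transpose_Circ, transpose_transpose]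

theorem stmt18_general (n : ℕ) (a b : Polynomial (ZMod 2))
    (HX HZ : Matrix (Fin n) (Fin n ⊕ Fin n) (ZMod 2))
    (hHX : HX = Matrix.fromCols (Circ n a) (Circ n b))
    (hHZ : HZ = Matrix.fromCols (Circ n b)ᵀ (Circ n a)ᵀ)
    (dZ dX : ℕ)
    (hdZ : dZ = sInf {m : ℕ | ∃ w : Fin n ⊕ Fin n → ZMod 2,
      HZ.mulVec w = 0 ∧ w ∉ LinearMap.range HX.vecMulLinear ∧ m = hammingNorm w})
    (hdX : dX = sInf {m : ℕ | ∃ w : Fin n ⊕ Fin n → ZMod 2,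
      HX.mulVec w = 0 ∧ w ∉ LinearMap.range HZ.vecMulLinear ∧ m = hammingNorm w}) :
    (∃ (σ : Equiv.Perm (Fin n)) (τ : Equiv.Perm (Fin n ⊕ Fin n)),
      HZ = σ.permMatrix (ZMod 2) * HX * τ.permMatrix (ZMod 2) ∧
      HX = σ.permMatrix (ZMod 2) * HZ * τ.permMatrix (ZMod 2)) ∧
    dX = dZ := by
  set ρ := Equiv.neg (Fin n)
  set τ := (Equiv.sumComm (Fin n) (Fin n)).trans (Equiv.sumCongr ρ ρ)
  have hZ : HZ = HX.submatrix ρ τ := by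
    rw [hHX, hHZ, fromCols_submatrix_sumComm, ← transpose_Circ, ← transpose_Circ]
  have hX : HX = HZ.submatrix ρ τ := by
    rw [hHX, hHZ, fromCols_submatrix_sumComm, ← Circ_eq_transpose_submatrix_neg,
      ← Circ_eq_transpose_submatrix_neg]
  refine ⟨⟨ρ, τ.symm, ?_, ?_⟩, ?_⟩
  · rwa [permMatrix_mul_mul_permMatrix, Equiv.symm_symm]
  · rwa [permMatrix_mul_mul_permMatrix, Equiv.symm_symm]
  · rw [hdX, hdZ]
    change sInf (logicalWeights HX HZ) = sInf (logicalWeights HZ HX)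
    rw [← logicalWeights_submatrix HZ HX ρ ρ τ, ← hX, ← hZ]

/-- `H_Z` and `H_X` of a GB code are permutation-equivalent
(`H_Z = P H_X Q` and `H_X = P H_Z Q` for permutation matrices `P`, `Q`), and
consequently `d_X = d_Z`. -/
theorem stmt18 (n : ℕ) (hn : 1 ≤ n) (a b : Polynomial (ZMod 2))
    (HX HZ : Matrix (Fin n) (Fin n ⊕ Fin n) (ZMod 2))
    (hHX : HX = Matrix.fromCols (Circ n a) (Circ n b))
    (hHZ : HZ = Matrix.fromCols (Circ n b)ᵀ (Circ n a)ᵀ)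
    (dZ dX : ℕ)
    (hdZ : dZ = sInf {m : ℕ | ∃ w : Fin n ⊕ Fin n → ZMod 2,
      HZ.mulVec w = 0 ∧ w ∉ LinearMap.range HX.vecMulLinear ∧ m = hammingNorm w})
    (hdX : dX = sInf {m : ℕ | ∃ w : Fin n ⊕ Fin n → ZMod 2,
      HX.mulVec w = 0 ∧ w ∉ LinearMap.range HZ.vecMulLinear ∧ m = hammingNorm w}) :
    (∃ (σ : Equiv.Perm (Fin n)) (τ : Equiv.Perm (Fin n ⊕ Fin n)),
      HZ = σ.permMatrix (ZMod 2) * HX * τ.permMatrix (ZMod 2) ∧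
      HX = σ.permMatrix (ZMod 2) * HZ * τ.permMatrix (ZMod 2)) ∧
    dX = dZ :=
  stmt18_general n a b HX HZ hHX hHZ dZ dX hdZ hdX

end
end
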